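/- Let A = (a_{ij})_{i,j∈I} be an integer matrix with a_{ii} = 2, fix i ∈ I, and suppose q_i ∈ ℂ^× is not a root of unity. If φ ∈ 𝒜 satisfies ζ_i(φ) − φ = {y_i}_i, then φ = β_i^+ · y_i + φ_0 + β_i^- · y_i^{-1} for some φ_0 ∈ 𝒜_{x_i}, where β_i^+ = −q_i·(q_i − q_i^{-1})^{-2} and β_i^- = −q_i^{-1}·(q_i − q_i^{-1})^{-2}. -/

import Mathlib

noncomputable section

/-- The Laurent polynomial algebra `ℂ[x_i^{±1} : i ∈ ι]`, realized as the group algebra of the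
free abelian group `ι → ℤ` over `ℂ` (for `ι` finite this is `ℤ^ι`). -/
abbrev LaurentAlg (ι : Type*) : Type _ := AddMonoidAlgebra ℂ (ι → ℤ)

/-- The monomial `∏_i x_i^{μ i}`. -/
def mono {ι : Type*} (μ : ι → ℤ) : LaurentAlg ι := AddMonoidAlgebra.single μ 1

lemma mono_zero {ι : Type*} : mono (0 : ι → ℤ) = 1 := rfl

lemma mono_add {ι : Type*} (μ ν : ι → ℤ) : mono (μ + ν) = mono μ * mono ν := by
  simp [mono, AddMonoidAlgebra.single_mul_single]

/-- The auxiliary monoid homomorphism `μ ↦ c^{-μ i} · x^μ` underlying `ζ_i`. -/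
def zetaHom {ι : Type*} (c : ℂˣ) (i : ι) : Multiplicative (ι → ℤ) →* LaurentAlg ι where
  toFun μ := ((c ^ (-(Multiplicative.toAdd μ i)) : ℂˣ) : ℂ) • mono (Multiplicative.toAdd μ)
  map_one' := by
    simp [mono_zero]
  map_mul' μ ν := by
    show ((c ^ (-(Multiplicative.toAdd (μ * ν) i)) : ℂˣ) : ℂ) • mono (Multiplicative.toAdd (μ * ν)) = _
    have h : Multiplicative.toAdd (μ * ν) = Multiplicative.toAdd μ + Multiplicative.toAdd ν := rfl
    rw [h, mono_add, Pi.add_apply, neg_add, zpow_add, Units.val_mul, mul_smul,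
      smul_mul_assoc, mul_smul_comm]

/-- The `ℂ`-algebra endomorphism `ζ_i` of the Laurent polynomial algebra determined by
`ζ_i(x_j) = c^{-δ_{ij}} x_j` (its inverse automorphism is `zeta c⁻¹ i`). -/
def zeta {ι : Type*} (c : ℂˣ) (i : ι) : LaurentAlg ι →ₐ[ℂ] LaurentAlg ι :=
  AddMonoidAlgebra.lift ℂ (LaurentAlg ι) (ι → ℤ) (zetaHom c i)

/-- The element `{u}_s = (u - u⁻¹)/(s - s⁻¹)` for the unit `u = c · x^μ` of the Laurent
polynomial algebra (whose inverse is `c⁻¹ · x^{-μ}`). -/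
def brk {ι : Type*} (s c : ℂ) (μ : ι → ℤ) : LaurentAlg ι :=
  ((s - s⁻¹)⁻¹ : ℂ) • (c • mono μ - c⁻¹ • mono (-μ))

/-- The shiftability system (4.1) for the integer matrix `a` with parameters `q i`:
`ζ_i(φ_i) − φ_i = {y_i}_i` for all `i`, and `φ_i φ_j = ζ_j^{-1}(φ_i)·ζ_i^{-1}(φ_j)` for `i ≠ j`,
where `y_i = ∏_j x_j^{a j i}`. -/
def ShiftSystem {ι : Type*} (a : ι → ι → ℤ) (q : ι → ℂˣ) (φ : ι → LaurentAlg ι) : Prop :=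
  (∀ i, zeta (q i) i (φ i) - φ i = brk ((q i : ℂ)) 1 (fun j => a j i)) ∧
  (∀ i j, i ≠ j → φ i * φ j = zeta (q j)⁻¹ j (φ i) * zeta (q i)⁻¹ i (φ j))

/-- The exponent vector of the single variable `x_k`. -/
def xvec {ι : Type*} [DecidableEq ι] (k : ι) : ι → ℤ := fun j => if j = k then 1 else 0

end

/-! `ζ_i` scales the monomial `x^μ` by `q_i^{-μ_i}`, so when `q_i` has infinite order its fixed
points are exactly `𝒜_{x_i}`, and the solutions of `ζ_i(φ) − φ = {y_i}_i` form a coset of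
`𝒜_{x_i}`. Since `y_i` involves `x_i` with exponent `a_{ii} = 2`, one solution is
`β_i⁺ y_i + β_i⁻ y_i⁻¹`. -/

lemma zeta_single {ι : Type*} (c : ℂˣ) (i : ι) (μ : ι → ℤ) (b : ℂ) :
    zeta c i (AddMonoidAlgebra.single μ b) =
      AddMonoidAlgebra.single μ (((c ^ (-μ i) : ℂˣ) : ℂ) * b) := by
  rw [zeta, AddMonoidAlgebra.lift_single]
  change b • ((c ^ (-μ i) : ℂˣ) : ℂ) • mono μ = _
  rw [smul_smul, mono, AddMonoidAlgebra.smul_single', mul_one, mul_comm]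

lemma zeta_mono {ι : Type*} (c : ℂˣ) (i : ι) (μ : ι → ℤ) :
    zeta c i (mono μ) = ((c ^ (-μ i) : ℂˣ) : ℂ) • mono μ := by
  rw [mono, zeta_single, AddMonoidAlgebra.smul_single', mul_one]

lemma coeff_zeta {ι : Type*} (c : ℂˣ) (i : ι) (φ : LaurentAlg ι) (μ : ι → ℤ) :
    (zeta c i φ).coeff μ = ((c ^ (-μ i) : ℂˣ) : ℂ) * φ.coeff μ := by
  classical
  induction φ using AddMonoidAlgebra.induction_linear with
  | zero => simp
  | add f g hf hg =>
    simp only [map_add, AddMonoidAlgebra.coeff_add, Finsupp.add_apply, hf, hg, mul_add]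
  | single ν b =>
    rw [zeta_single]
    simp only [AddMonoidAlgebra.coeff_single, Finsupp.single_apply]
    split_ifs with h
    · rw [h]
    · rw [mul_zero]

lemma apply_eq_zero_of_mem_support_of_zeta_eq_self {ι : Type*} {c : ℂˣ} (hc : ¬IsOfFinOrder c)
    {i : ι} {φ : LaurentAlg ι} (h : zeta c i φ = φ) {μ : ι → ℤ} (hμ : μ ∈ φ.coeff.support) :
    μ i = 0 := by
  by_contra hμi
  have hfix : (((c ^ (-μ i) : ℂˣ) : ℂ) - 1) * φ.coeff μ = 0 := by
    rw [sub_mul, one_mul, ← coeff_zeta, h, sub_self]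
  have hne : ((c ^ (-μ i) : ℂˣ) : ℂ) ≠ 1 := fun h1 =>
    hc (isOfFinOrder_iff_zpow_eq_one.mpr ⟨-μ i, neg_ne_zero.mpr hμi, Units.val_eq_one.mp h1⟩)
  exact Finsupp.mem_support_iff.mp hμ ((mul_eq_zero.mp hfix).resolve_left (sub_ne_zero.mpr hne))

lemma zpow_neg_two_sub_one_mul {K : Type*} [Field K] {t : K} (ht : t ≠ 0) :
    (t ^ (-2 : ℤ) - 1) * (-t * ((t - t⁻¹) ^ 2)⁻¹) = (t - t⁻¹)⁻¹ := by
  have h : (t ^ (-2 : ℤ) - 1) * -t = t - t⁻¹ := by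
    rw [zpow_neg, zpow_two]
    field_simp
    ring
  rw [← mul_assoc, h, ← div_eq_mul_inv, sq, div_self_mul_self']

lemma zpow_two_sub_one_mul {K : Type*} [Field K] {t : K} (ht : t ≠ 0) :
    (t ^ (2 : ℤ) - 1) * (-t⁻¹ * ((t - t⁻¹) ^ 2)⁻¹) = -(t - t⁻¹)⁻¹ := by
  have h : (t ^ (2 : ℤ) - 1) * -t⁻¹ = -(t - t⁻¹) := by
    rw [zpow_two]
    field_simp
  rw [← mul_assoc, h, neg_mul, ← div_eq_mul_inv, sq, div_self_mul_self']

noncomputable def shiftSolution {ι : Type*} (t : ℂ) (ν : ι → ℤ) : LaurentAlg ι :=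
  (-t * ((t - t⁻¹) ^ 2)⁻¹) • mono ν + (-t⁻¹ * ((t - t⁻¹) ^ 2)⁻¹) • mono (-ν)

lemma zeta_shiftSolution_sub_self {ι : Type*} (s : ℂˣ) {i : ι} {ν : ι → ℤ} (hν : ν i = 2) :
    zeta s i (shiftSolution s ν) - shiftSolution s ν = brk (s : ℂ) 1 ν := by
  have hplus := zpow_neg_two_sub_one_mul s.ne_zero
  have hminus := zpow_two_sub_one_mul s.ne_zero
  simp only [shiftSolution, brk, map_add, map_smul, zeta_mono, Pi.neg_apply, hν, neg_neg,
    Units.val_zpow_eq_zpow_val, one_smul, inv_one]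
  linear_combination (norm := module)
    hplus • (mono ν : LaurentAlg ι) + hminus • (mono (-ν) : LaurentAlg ι)

theorem shift_equation_solution_form_general {ι : Type*}
    (a : ι → ι → ℤ) (ha : ∀ k, a k k = 2) (i : ι)
    (s : ℂˣ) (hs : ∀ m : ℕ, 0 < m → s ^ m ≠ 1)
    (φ : LaurentAlg ι)
    (h : zeta s i φ - φ = brk (s : ℂ) 1 (fun j => a j i)) :
    ∃ φ₀ : LaurentAlg ι, (∀ μ ∈ φ₀.coeff.support, μ i = 0) ∧
      φ = (-(s : ℂ) * (((s : ℂ) - (s : ℂ)⁻¹) ^ 2)⁻¹) • mono (fun j => a j i) + φ₀ +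
        (-(s : ℂ)⁻¹ * (((s : ℂ) - (s : ℂ)⁻¹) ^ 2)⁻¹) • mono (-(fun j => a j i)) := by
  have hinf : ¬IsOfFinOrder s := fun hfin =>
    let ⟨m, hm, hsm⟩ := isOfFinOrder_iff_pow_eq_one.mp hfin
    hs m hm hsm
  have hsol := zeta_shiftSolution_sub_self s (ν := fun j => a j i) (ha i)
  set ψ := shiftSolution (s : ℂ) (fun j => a j i) with hψ
  have hfix : zeta s i (φ - ψ) = φ - ψ := by
    rw [map_sub]
    exact sub_eq_sub_iff_sub_eq_sub.mp (h.trans hsol.symm)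
  refine ⟨φ - ψ, fun μ hμ => apply_eq_zero_of_mem_support_of_zeta_eq_self hinf hfix hμ, ?_⟩
  rw [hψ, shiftSolution]
  abel

/-- Lemma A.1: if `ζ_i(φ) − φ = {y_i}_i` with `q_i` not a root of unity,
then `φ = β_i⁺·y_i + φ_0 + β_i⁻·y_i⁻¹` with `φ_0 ∈ 𝒜_{x_i}` (i.e. no monomial of `φ_0`
involves `x_i`), where `β_i^± = −q_i^{±1}(q_i − q_i⁻¹)⁻²`. -/
theorem shift_equation_solution_form {ι : Type*} [Fintype ι] [DecidableEq ι]
    (a : ι → ι → ℤ) (ha : ∀ k, a k k = 2) (i : ι)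
    (s : ℂˣ) (hs : ∀ m : ℕ, 0 < m → s ^ m ≠ 1)
    (φ : LaurentAlg ι)
    (h : zeta s i φ - φ = brk (s : ℂ) 1 (fun j => a j i)) :
    ∃ φ₀ : LaurentAlg ι, (∀ μ ∈ φ₀.coeff.support, μ i = 0) ∧
      φ = (-(s : ℂ) * (((s : ℂ) - (s : ℂ)⁻¹) ^ 2)⁻¹) • mono (fun j => a j i) + φ₀ +
        (-(s : ℂ)⁻¹ * (((s : ℂ) - (s : ℂ)⁻¹) ^ 2)⁻¹) • mono (-(fun j => a j i)) :=
  shift_equation_solution_form_general a ha i s hs φ h
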